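/- Exact-divisibility criterion for lopsided division: let a b : ℕ be positive with b odd, b ≤ a, and let Γ = 1 + Nat.size a - Nat.size b. Let c, r : ℕ → ℤ be the lopsided-division sequences for (a : ℤ) and (b : ℤ). Then b divides a (in ℕ) if and only if c Γ = r Γ. -/

import Mathlib

/-!
By the full-subtractor identity `x ^^^ y ^^^ z - 2 * borrow = x - y - z`, each step subtracts the
subtrahend `tᵢ ∈ {0, 2ⁱ b}` from the borrow-save remainder `c i - r i`, so
`c i - r i = a - b q` with `0 ≤ q < 2ⁱ`. Inductively bit `i` of `r i` vanishes and
`2ⁱ ∣ c i - r i`, so bit `i` of `c i` is the parity of `(c i - r i) / 2ⁱ`; as `b` is odd,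
subtracting `2ⁱ b` exactly when that bit is set makes the remainder divisible by `2ⁱ⁺¹`.
At `n = 1 + size a - size b` this gives `b q ≡ a [MOD 2ⁿ]`, while `a < 2ⁿ b`. If `b ∣ a` then
`a / b < 2ⁿ`, and cancelling the unit `b` modulo `2ⁿ` forces `a / b = q`, i.e. `c n = r n`.
-/

instance : XorOp ℤ := ⟨Int.xor⟩
instance : AndOp ℤ := ⟨Int.land⟩

namespace Int

theorem eq_zero_of_forall_two_pow_dvd {x : ℤ} (h : ∀ n : ℕ, (2 : ℤ) ^ n ∣ x) : x = 0 := by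
  by_contra hx
  obtain ⟨n, hn⟩ := (finiteMultiplicity_iff (a := 2)).2 ⟨by decide, hx⟩
  exact hn (h _)

theorem odd_iff_bodd (x : ℤ) : Odd x ↔ x.bodd = true := by
  conv_lhs => rw [← bodd_add_div2 x]
  cases x.bodd <;> simp [parity_simps]

@[simp] theorem zero_testBit (i : ℕ) : (0 : ℤ).testBit i = false := by
  simp [testBit]

theorem testBit_zero_eq_bodd (x : ℤ) : x.testBit 0 = x.bodd := by
  conv_lhs => rw [← bit_decomp x]
  exact testBit_bit_zero _ _

theorem testBit_succ_eq_div2 (x : ℤ) (i : ℕ) : x.testBit (i + 1) = x.div2.testBit i := by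
  conv_lhs => rw [← bit_decomp x]
  exact testBit_bit_succ _ _ _

theorem testBit_two_mul_succ (x : ℤ) (i : ℕ) : (2 * x).testBit (i + 1) = x.testBit i := by
  rw [testBit_succ_eq_div2, div2_val, Int.mul_ediv_cancel_left _ two_ne_zero]

theorem testBit_add_two_pow_mul (x k : ℤ) (i : ℕ) :
    (x + 2 ^ i * k).testBit i = (x.testBit i ^^ k.bodd) := by
  induction i generalizing x with
  | zero => simp [testBit_zero_eq_bodd, bodd_add]
  | succ i ih =>
    rw [testBit_succ_eq_div2, testBit_succ_eq_div2, ← ih, div2_val, div2_val, pow_succ',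
      mul_assoc, Int.add_mul_ediv_left _ _ two_ne_zero]

theorem testBit_two_pow_mul_of_odd {b : ℤ} (hb : Odd b) (i : ℕ) :
    (2 ^ i * b).testBit i = true := by
  simpa [(odd_iff_bodd b).1 hb] using testBit_add_two_pow_mul 0 b i

@[simp] theorem testBit_xor (x y : ℤ) (i : ℕ) :
    (x ^^^ y).testBit i = (x.testBit i ^^ y.testBit i) :=
  testBit_lxor x y i

@[simp] theorem testBit_and (x y : ℤ) (i : ℕ) :
    (x &&& y).testBit i = (x.testBit i && y.testBit i) :=
  testBit_land x y i

@[simp] theorem testBit_not (x : ℤ) (i : ℕ) : (~~~x).testBit i = !x.testBit i :=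
  testBit_lnot x i

theorem xor_bit (a b : Bool) (m n : ℤ) : bit a m ^^^ bit b n = bit (a ^^ b) (m ^^^ n) :=
  lxor_bit a m b n

theorem and_bit (a b : Bool) (m n : ℤ) : bit a m &&& bit b n = bit (a && b) (m &&& n) :=
  land_bit a m b n

theorem not_bit (a : Bool) (n : ℤ) : ~~~bit a n = bit (!a) (~~~n) :=
  lnot_bit a n

def subBorrow (x y z : ℤ) : ℤ := (~~~x &&& y) ^^^ (y &&& z) ^^^ (z &&& ~~~x)

theorem subBorrow_bit (a b c : Bool) (x y z : ℤ) :
    subBorrow (bit a x) (bit b y) (bit c z) =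
      bit ((!a && b) ^^ (b && c) ^^ (c && !a)) (subBorrow x y z) := by
  simp only [subBorrow, not_bit, and_bit, xor_bit]

theorem xor_xor_sub_two_mul_subBorrow (x y z : ℤ) :
    (x ^^^ y ^^^ z) - 2 * subBorrow x y z = x - y - z := by
  -- bit recursion on `ℤ` is not well founded (`-1 = bit true (-1)`), so bound the defect 2-adically
  suffices ∀ n : ℕ, ∀ x y z : ℤ, 2 ^ n ∣ (x ^^^ y ^^^ z) - 2 * subBorrow x y z - (x - y - z) from
    sub_eq_zero.1 (eq_zero_of_forall_two_pow_dvd fun n => this n x y z)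
  intro n
  induction n with
  | zero => simp
  | succ n ih =>
    intro x y z
    obtain ⟨k, hk⟩ := ih x.div2 y.div2 z.div2
    rw [← bit_decomp x, ← bit_decomp y, ← bit_decomp z, xor_bit, xor_bit, subBorrow_bit]
    refine ⟨k, ?_⟩
    cases x.bodd <;> cases y.bodd <;> cases z.bodd <;>
      simp only [bit_val, Bool.not_true, Bool.not_false, Bool.and_true, Bool.and_false,
        Bool.xor_false, Bool.xor_true, cond_true, cond_false] <;>
      linear_combination 2 * hk

end Int

def lopsidedSubtrahend (b x : ℤ) (i : ℕ) : ℤ := if x.testBit i then 2 ^ i * b else 0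

theorem testBit_lopsidedSubtrahend {b : ℤ} (hb : Odd b) (x : ℤ) (i : ℕ) :
    (lopsidedSubtrahend b x i).testBit i = x.testBit i := by
  unfold lopsidedSubtrahend
  split_ifs with hx
  · rw [hx, Int.testBit_two_pow_mul_of_odd hb]
  · simp [hx]

structure IsLopsidedDivision (a b : ℤ) (c r : ℕ → ℤ) : Prop where
  c_zero : c 0 = a
  r_zero : r 0 = 0
  c_succ : ∀ i, c (i + 1) = c i ^^^ r i ^^^ lopsidedSubtrahend b (c i) i
  r_succ : ∀ i, r (i + 1) = 2 * Int.subBorrow (c i) (r i) (lopsidedSubtrahend b (c i) i)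

namespace IsLopsidedDivision

variable {a b : ℤ} {c r : ℕ → ℤ}

theorem sub_succ (h : IsLopsidedDivision a b c r) (i : ℕ) :
    c (i + 1) - r (i + 1) = c i - r i - lopsidedSubtrahend b (c i) i := by
  rw [h.c_succ, h.r_succ, Int.xor_xor_sub_two_mul_subBorrow]

theorem testBit_r_self (h : IsLopsidedDivision a b c r) (hb : Odd b) (i : ℕ) :
    (r i).testBit i = false := by
  induction i with
  | zero => simp [h.r_zero]
  | succ i ih =>
    rw [h.r_succ, Int.testBit_two_mul_succ]
    simp [Int.subBorrow, testBit_lopsidedSubtrahend hb, ih]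

theorem two_pow_dvd_sub (h : IsLopsidedDivision a b c r) (hb : Odd b) (i : ℕ) :
    (2 : ℤ) ^ i ∣ c i - r i := by
  induction i with
  | zero => exact one_dvd _
  | succ i ih =>
    obtain ⟨k, hk⟩ := ih
    -- bit `i` of `c i` is the parity of `k`, so `2 ^ i * b` is subtracted exactly when `k` is odd
    have hbit : (c i).testBit i = k.bodd := by
      rw [show c i = r i + 2 ^ i * k by linarith, Int.testBit_add_two_pow_mul, h.testBit_r_self hb]
      exact Bool.false_xor _
    have hdvd : ∀ m : ℤ, Even m → (2 : ℤ) ^ (i + 1) ∣ 2 ^ i * m := fun m ⟨l, hl⟩ =>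
      ⟨l, by rw [hl, pow_succ]; ring⟩
    rw [h.sub_succ, hk, lopsidedSubtrahend, hbit]
    cases hodd : k.bodd
    · rw [if_neg Bool.false_ne_true, sub_zero]
      exact hdvd k (by rw [← Int.not_odd_iff_even, Int.odd_iff_bodd, hodd]; decide)
    · rw [if_pos rfl, ← mul_sub]
      exact hdvd _ (((Int.odd_iff_bodd k).2 hodd).sub_odd hb)

theorem exists_sub_eq_sub_mul (h : IsLopsidedDivision a b c r) (i : ℕ) :
    ∃ q : ℕ, q < 2 ^ i ∧ c i - r i = a - b * q := by
  induction i with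
  | zero => exact ⟨0, by simp [h.c_zero, h.r_zero]⟩
  | succ i ih =>
    obtain ⟨q, hq, hcr⟩ := ih
    rw [h.sub_succ, hcr, lopsidedSubtrahend]
    split_ifs
    · exact ⟨q + 2 ^ i, by rw [pow_succ]; omega, by push_cast; ring⟩
    · exact ⟨q, by rw [pow_succ]; omega, by ring⟩

end IsLopsidedDivision

theorem Nat.lt_two_pow_one_add_size_sub_size_mul (a : ℕ) {b : ℕ} (hb : 0 < b) :
    a < 2 ^ (1 + a.size - b.size) * b :=
  have hb_size : 0 < b.size := Nat.size_pos.2 hb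
  calc a < 2 ^ a.size := a.lt_size_self
    _ ≤ 2 ^ ((1 + a.size - b.size) + (b.size - 1)) := Nat.pow_le_pow_right two_pos (by omega)
    _ = 2 ^ (1 + a.size - b.size) * 2 ^ (b.size - 1) := pow_add _ _ _
    _ ≤ 2 ^ (1 + a.size - b.size) * b :=
      Nat.mul_le_mul_left _ (Nat.lt_size.1 (by omega))

theorem Nat.dvd_iff_eq_mul_of_modEq {a b q n : ℕ} (hb : Odd b) (ha : a < 2 ^ n * b)
    (hq : q < 2 ^ n) (hmod : b * q ≡ a [MOD 2 ^ n]) : b ∣ a ↔ a = b * q := by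
  refine ⟨?_, fun h => ⟨q, h⟩⟩
  rintro ⟨m, rfl⟩
  have hm : m < 2 ^ n := Nat.lt_of_mul_lt_mul_left (ha.trans_eq (mul_comm _ _))
  have hqm : q ≡ m [MOD 2 ^ n] :=
    hmod.cancel_left_of_coprime ((Nat.coprime_two_left.2 hb).pow_left n)
  rw [hqm.eq_of_lt_of_lt hq hm]

theorem lopsided_division_dvd_iff_general (a b : ℕ) (hb : Odd b) (c r : ℕ → ℤ)
    (hc0 : c 0 = (a : ℤ)) (hr0 : r 0 = 0)
    (hc : ∀ i, c (i + 1) =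
      c i ^^^ r i ^^^ (if (c i).testBit i then 2 ^ i * (b : ℤ) else 0))
    (hr : ∀ i, r (i + 1) =
      2 * (((~~~(c i)) &&& r i)
        ^^^ ((r i) &&& (if (c i).testBit i then 2 ^ i * (b : ℤ) else 0))
        ^^^ ((if (c i).testBit i then 2 ^ i * (b : ℤ) else 0) &&& (~~~(c i))))) :
    b ∣ a ↔ c (1 + Nat.size a - Nat.size b) = r (1 + Nat.size a - Nat.size b) := by
  have h : IsLopsidedDivision a b c r := ⟨hc0, hr0, hc, hr⟩
  set n := 1 + Nat.size a - Nat.size b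
  obtain ⟨q, hq, hcr⟩ := h.exists_sub_eq_sub_mul n
  have hmod : b * q ≡ a [MOD 2 ^ n] := by
    rw [← Int.natCast_modEq_iff, Int.modEq_iff_dvd]
    push_cast
    exact hcr ▸ h.two_pow_dvd_sub hb.natCast n
  rw [Nat.dvd_iff_eq_mul_of_modEq hb (a.lt_two_pow_one_add_size_sub_size_mul hb.pos) hq hmod,
    ← sub_eq_zero (a := c n), hcr, sub_eq_zero]
  norm_cast

/-- Exact-divisibility criterion for lopsided division: with
`Γ = 1 + Nat.size a - Nat.size b`, the odd number `b` divides `a` iff `c Γ = r Γ`. -/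
theorem lopsided_division_dvd_iff (a b : ℕ) (ha : 0 < a) (hb0 : 0 < b)
    (hb : Odd b) (hba : b ≤ a) (c r : ℕ → ℤ)
    (hc0 : c 0 = (a : ℤ)) (hr0 : r 0 = 0)
    (hc : ∀ i, c (i + 1) =
      c i ^^^ r i ^^^ (if (c i).testBit i then 2 ^ i * (b : ℤ) else 0))
    (hr : ∀ i, r (i + 1) =
      2 * (((~~~(c i)) &&& r i)
        ^^^ ((r i) &&& (if (c i).testBit i then 2 ^ i * (b : ℤ) else 0))
        ^^^ ((if (c i).testBit i then 2 ^ i * (b : ℤ) else 0) &&& (~~~(c i))))) :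
    b ∣ a ↔ c (1 + Nat.size a - Nat.size b) = r (1 + Nat.size a - Nat.size b) :=
  lopsided_division_dvd_iff_general a b hb c r hc0 hr0 hc hr
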